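/- Let H be a complex Hilbert space and A : H → H a bounded invertible linear operator that cannot be written as the sum of a coercive operator and a compact operator. Suppose (H*_N)_{N≥1} is a sequence of finite-dimensional subspaces of H with H*_1 ⊆ H*_2 ⊆ ⋯ for which the Galerkin method for A converges. Then there exists a sequence (H_N)_{N≥1} of finite-dimensional subspaces of H with H_1 ⊆ H_2 ⊆ ⋯ such that: (a) the Galerkin method for A and (H_N) does not converge; and (b) for each N ∈ ℕ there exists M_N ∈ ℕ with H*_N ⊆ H_N ⊆ H*_{M_N}. -/

import Mathlib

/-!
Fix `N` so large that the Galerkin systems of `Vs N` are uniquely solvable, with solution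
operator `S`, and call `w ⊥ Vs N` nearly singular when `|⟪A (w - S A w), w⟫| ≤ ε ‖w‖²`: then
adjoining `w` to `Vs N` gives an almost singular Galerkin system.

If nearly singular `w ∈ ⋃ Vs M` exist for every `ε` and arbitrarily large `N`, adjoin such a `w`
with `ε = 1 / (k + 1)` to `Vs N`, along a sequence of `N` sparse enough that `w` already lies in
the next chosen `Vs N`. The enlarged Galerkin systems then have solutions of norm `≥ ‖w‖` for
data of norm `≤ ε ‖w‖`, so their solution operators are not uniformly bounded; by
Banach–Steinhaus the Galerkin method cannot converge.

Otherwise, for some `ε` and `N`, density of `⋃ Vs M` gives `|⟪T w, w⟫| ≥ ε ‖w‖²` on `(Vs N)ᗮ`,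
where `T = A - A S A` differs from `A` by a finite-rank operator. By the Toeplitz–Hausdorff
theorem the numerical range of `T` on `(Vs N)ᗮ` is convex, so it lies in a half-plane
`Re (μ z) ≥ ε`, and then `T` compressed to `(Vs N)ᗮ` plus `ε μ` times the projection onto `Vs N`
is coercive and differs from `A` by a finite-rank operator.
-/

open scoped ComplexInnerProductSpace
open Filter

variable {H : Type*} [NormedAddCommGroup H] [InnerProductSpace ℂ H] [CompleteSpace H]

/-- A bounded linear operator `A` on a complex Hilbert space is *coercive* if there exists
`α > 0` such that `|⟨Aφ, φ⟩| ≥ α‖φ‖²` for all `φ`. -/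
def Coercive (A : H →L[ℂ] H) : Prop :=
  ∃ α : ℝ, 0 < α ∧ ∀ φ : H, α * ‖φ‖ ^ 2 ≤ ‖⟪A φ, φ⟫‖

/-- `x` is a Galerkin solution in the subspace `V` for the equation `A φ = g`. -/
def IsGalerkinSolution (A : H →L[ℂ] H) (V : Submodule ℂ H) (g x : H) : Prop :=
  x ∈ V ∧ ∀ ψ ∈ V, ⟪A x, ψ⟫ = ⟪g, ψ⟫

/-- The Galerkin method for `A` and the sequence of subspaces `V N` converges. -/
def GalerkinConverges (A : H →L[ℂ] H) (V : ℕ → Submodule ℂ H) : Prop :=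
  ∀ g : H,
    (∃ N₀ : ℕ, ∀ N : ℕ, N₀ ≤ N → ∃! x : H, IsGalerkinSolution A (V N) g x) ∧
    ∀ φ : ℕ → H, (∀ᶠ N in atTop, IsGalerkinSolution A (V N) g (φ N)) →
      ∀ x : H, A x = g → Tendsto φ atTop (nhds x)

open Submodule ComplexConjugate

theorem norm_le_norm_add_of_inner_eq_zero {𝕜 F : Type*} [RCLike 𝕜] [NormedAddCommGroup F]
    [InnerProductSpace 𝕜 F] {x y : F} (h : inner 𝕜 x y = 0) : ‖x‖ ≤ ‖x + y‖ :=
  (mul_self_le_mul_self_iff (norm_nonneg _) (norm_nonneg _)).2 <| by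
    rw [norm_add_sq_eq_norm_sq_add_norm_sq_of_inner_eq_zero x y h]
    exact le_add_of_nonneg_right (mul_self_nonneg _)

theorem norm_starProjection_le_of_inner_le {𝕜 F : Type*} [RCLike 𝕜] [NormedAddCommGroup F]
    [InnerProductSpace 𝕜 F] {W : Submodule 𝕜 F} [W.HasOrthogonalProjection] {v : F} {C : ℝ}
    (hC : 0 ≤ C) (h : ∀ ψ ∈ W, ‖inner 𝕜 v ψ‖ ≤ C * ‖ψ‖) : ‖W.starProjection v‖ ≤ C := by
  set p := W.starProjection v
  have hp : ‖p‖ ^ 2 ≤ C * ‖p‖ := calc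
    ‖p‖ ^ 2 = RCLike.re (inner 𝕜 p p) := (inner_self_eq_norm_sq p).symm
    _ = RCLike.re (inner 𝕜 v p) := by
      rw [W.inner_starProjection_left_eq_right,
        starProjection_eq_self_iff.2 (W.starProjection_apply_mem v)]
    _ ≤ ‖inner 𝕜 v p‖ := RCLike.re_le_norm _
    _ ≤ C * ‖p‖ := h p (W.starProjection_apply_mem v)
  nlinarith [norm_nonneg p]

theorem forall_mem_orthogonal_le_of_dense {𝕜 F : Type*} [RCLike 𝕜] [NormedAddCommGroup F]
    [InnerProductSpace 𝕜 F] {K D : Submodule 𝕜 F} [K.HasOrthogonalProjection] (hKD : K ≤ D)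
    (hD : Dense (D : Set F)) {f g : F → ℝ} (hf : Continuous f) (hg : Continuous g)
    (h : ∀ w ∈ Kᗮ, w ∈ D → f w ≤ g w) : ∀ w ∈ Kᗮ, f w ≤ g w := by
  set Q := Kᗮ.starProjection
  have hclosed : IsClosed {x | f (Q x) ≤ g (Q x)} :=
    isClosed_le (hf.comp Q.continuous) (hg.comp Q.continuous)
  have hDsub : (D : Set F) ⊆ {x | f (Q x) ≤ g (Q x)} := fun x hx =>
    h _ (Kᗮ.starProjection_apply_mem x) <| by
      rw [starProjection_orthogonal_val]
      exact sub_mem hx (hKD (K.starProjection_apply_mem x))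
  intro w hw
  have : f (Q w) ≤ g (Q w) := hclosed.closure_subset_iff.2 hDsub (hD w)
  rwa [starProjection_eq_self_iff.2 hw] at this

theorem isCompactOperator_of_forall_mem {𝕜 E F : Type*} [NontriviallyNormedField 𝕜]
    [LocallyCompactSpace 𝕜] [NormedAddCommGroup E] [NormedSpace 𝕜 E] [NormedAddCommGroup F]
    [NormedSpace 𝕜 F] (f : E →L[𝕜] F) (K : Submodule 𝕜 F) [FiniteDimensional 𝕜 K]
    (hf : ∀ x, f x ∈ K) : IsCompactOperator f :=
  have := FiniteDimensional.proper 𝕜 K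
  (isCompactOperator_of_locallyCompactSpace_dom (f.codRestrict K hf)).clm_comp K.subtypeL

theorem exists_unit_le_inner_of_convex {F : Type*} [NormedAddCommGroup F]
    [InnerProductSpace ℝ F] [CompleteSpace F] {C : Set F} (hC : Convex ℝ C) (hne : C.Nonempty)
    {ε : ℝ} (hε : 0 < ε) (hCε : ∀ z ∈ C, ε ≤ ‖z‖) :
    ∃ v : F, ‖v‖ = 1 ∧ ∀ z ∈ C, ε ≤ inner ℝ v z := by
  have hdisj : Disjoint (Metric.ball (0 : F) ε) C := Set.disjoint_left.2 fun z hz hzC =>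
    (hCε z hzC).not_gt (by simpa using hz)
  obtain ⟨f, u, hfu, hCu⟩ :=
    geometric_hahn_banach_open (convex_ball 0 ε) Metric.isOpen_ball hC hdisj
  set b := (InnerProductSpace.toDual ℝ F).symm f
  have hb : ∀ z, inner ℝ b z = f z := fun z => InnerProductSpace.toDual_symm_apply
  have hu : 0 < u := by simpa using hfu 0 (Metric.mem_ball_self hε)
  have hb0 : b ≠ 0 := by
    obtain ⟨z, hz⟩ := hne
    rintro hb0
    have := hCu z hz
    rw [← hb, hb0, inner_zero_left] at this
    linarith
  have hbn : 0 < ‖b‖ := norm_pos_iff.2 hb0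
  have hεu : ε * ‖b‖ ≤ u := by
    by_contra! h
    have hp : (u / ‖b‖ ^ 2) • b ∈ Metric.ball (0 : F) ε := by
      rw [mem_ball_zero_iff, norm_smul, Real.norm_of_nonneg (by positivity)]
      field_simp
      linarith
    have := hfu _ hp
    rw [← hb, inner_smul_right, real_inner_self_eq_norm_sq,
      div_mul_cancel₀ _ (by positivity)] at this
    exact lt_irrefl _ this
  refine ⟨‖b‖⁻¹ • b, by simp [norm_smul, hbn.ne'], fun z hz => ?_⟩
  rw [inner_smul_left, hb, RCLike.conj_to_real, le_inv_mul_iff₀ hbn]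
  nlinarith [hCu z hz]

section NumericalRange

variable {E : Type*} [NormedAddCommGroup E] [InnerProductSpace ℂ E]

def numericalRange (T : E →L[ℂ] E) (W : Submodule ℂ E) : Set ℂ :=
  {z | ∃ w ∈ W, ‖w‖ = 1 ∧ ⟪T w, w⟫ = z}

theorem inner_map_smul_self (T : E →L[ℂ] E) (c : ℂ) (w : E) :
    ⟪T (c • w), c • w⟫ = ((‖c‖ ^ 2 : ℝ) : ℂ) * ⟪T w, w⟫ := by
  rw [map_smul, inner_smul_left, inner_smul_right, ← mul_assoc, Complex.conj_mul']
  push_cast; rfl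

theorem inner_map_self_eq_of_smul_add_smul_eq_zero (T : E →L[ℂ] E) {x y : E} {α β : ℂ}
    (hx : ‖x‖ = 1) (hy : ‖y‖ = 1) (hβ : β ≠ 0) (h : α • x + β • y = 0) :
    ⟪T y, y⟫ = ⟪T x, x⟫ := by
  set c := -(β⁻¹ * α)
  have hyx : y = c • x := calc
    y = β⁻¹ • β • y := (inv_smul_smul₀ hβ y).symm
    _ = c • x := by rw [eq_neg_of_add_eq_zero_right h, smul_neg, smul_smul, neg_smul]
  have hc : ‖c‖ = 1 := by simpa [hyx, norm_smul, hx] using hy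
  rw [hyx, inner_map_smul_self, hc]
  simp

theorem exists_unit_inner_map_self (T : E →L[ℂ] E) {W : Submodule ℂ E} {w : E} (hwW : w ∈ W)
    (hw : w ≠ 0) : ∃ u ∈ W, ‖u‖ = 1 ∧ ⟪T w, w⟫ = ((‖w‖ ^ 2 : ℝ) : ℂ) * ⟪T u, u⟫ := by
  refine ⟨((‖w‖ : ℂ))⁻¹ • w, W.smul_mem _ hwW, norm_smul_inv_norm hw, ?_⟩
  have : (‖w‖ : ℂ) ≠ 0 := by exact_mod_cast norm_ne_zero_iff.2 hw
  rw [inner_map_smul_self, norm_inv, Complex.norm_real, norm_norm, ← mul_assoc]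
  push_cast
  field_simp

theorem exists_unit_im_conj_mul_add_mul_eq_zero (a b : ℂ) :
    ∃ γ : ℂ, ‖γ‖ = 1 ∧ (conj γ * a + γ * b).im = 0 := by
  set c := a - conj b
  set γ := Complex.exp (c.arg * Complex.I)
  have hγ : ‖γ‖ = 1 := Complex.norm_exp_ofReal_mul_I _
  -- `c = ‖c‖ γ`, so `conj γ * c` is real
  have hc : conj γ * c = ‖c‖ := by
    conv_lhs => rw [← Complex.norm_mul_exp_arg_mul_I c]
    rw [mul_left_comm, Complex.conj_mul', hγ]
    simp
  refine ⟨γ, hγ, ?_⟩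
  have : conj γ * a + γ * b = conj γ * c + (γ * b + conj (γ * b)) := by
    simp only [c, map_mul]; ring
  rw [this, hc, Complex.add_conj]
  simp

theorem exists_inner_map_self_eq_of_eq_zero_of_eq_one (T : E →L[ℂ] E) {x y : E}
    (hx : ‖x‖ = 1) (hy : ‖y‖ = 1) (hTx : ⟪T x, x⟫ = 0) (hTy : ⟪T y, y⟫ = 1) {t : ℝ}
    (ht : t ∈ Set.Icc (0 : ℝ) 1) : ∃ u ∈ span ℂ {x, y}, ‖u‖ = 1 ∧ ⟪T u, u⟫ = t := by
  obtain ⟨γ, hγ, hγim⟩ := exists_unit_im_conj_mul_add_mul_eq_zero ⟪T x, y⟫ ⟪T y, x⟫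
  set z : ℝ → E := fun s => (((1 - s : ℝ) : ℂ) * γ) • x + (s : ℂ) • y
  -- the phase `γ` keeps the quadratic form real along the path `z`
  have hTz : ∀ s : ℝ, ⟪T (z s), z s⟫ =
      (((1 - s) * s : ℝ) : ℂ) * (conj γ * ⟪T x, y⟫ + γ * ⟪T y, x⟫) + ((s ^ 2 : ℝ) : ℂ) := by
    intro s
    simp only [z, map_add, map_smul, inner_add_left, inner_add_right, inner_smul_left,
      inner_smul_right, hTx, hTy, map_mul, Complex.conj_ofReal]
    push_cast
    ring
  have hTz_im : ∀ s, (⟪T (z s), z s⟫).im = 0 := by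
    intro s
    rw [hTz, Complex.add_im, Complex.im_ofReal_mul, hγim, Complex.ofReal_im]
    simp
  set f : ℝ → ℝ := fun s => (⟪T (z s), z s⟫).re - t * ‖z s‖ ^ 2
  have hz0 : ‖z 0‖ = 1 := by simp [z, norm_smul, hγ, hx]
  obtain ⟨s, -, hfs⟩ : ∃ s ∈ Set.Icc (0 : ℝ) 1, f s = 0 := by
    refine intermediate_value_Icc zero_le_one (by fun_prop : Continuous f).continuousOn ⟨?_, ?_⟩
    · simp [f, hTz, hz0, ht.1]
    · simp [f, z, hTy, hy, ht.2]
  have hzs : z s ≠ 0 := by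
    intro h0
    rcases eq_or_ne s 0 with rfl | hs0
    · simp [h0] at hz0
    · have := inner_map_self_eq_of_smul_add_smul_eq_zero T hx hy (by exact_mod_cast hs0) h0
      rw [hTx, hTy] at this
      exact one_ne_zero this
  have hTzs : ⟪T (z s), z s⟫ = ((t * ‖z s‖ ^ 2 : ℝ) : ℂ) :=
    Complex.ext (by rw [Complex.ofReal_re]; exact sub_eq_zero.1 hfs)
      (by rw [Complex.ofReal_im]; exact hTz_im s)
  have hzmem : z s ∈ span ℂ {x, y} :=
    add_mem (smul_mem _ _ (subset_span (by simp))) (smul_mem _ _ (subset_span (by simp)))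
  obtain ⟨u, hu, hu1, hTu⟩ := exists_unit_inner_map_self T hzmem hzs
  have hn : ((‖z s‖ ^ 2 : ℝ) : ℂ) ≠ 0 := by exact_mod_cast pow_ne_zero 2 (norm_ne_zero_iff.2 hzs)
  refine ⟨u, hu, hu1, mul_left_cancel₀ hn ?_⟩
  rw [← hTu, hTzs]
  push_cast
  ring

theorem exists_inner_map_self_eq_convex_combination (T : E →L[ℂ] E) {x y : E} (hx : ‖x‖ = 1)
    (hy : ‖y‖ = 1) {t : ℝ} (ht : t ∈ Set.Icc (0 : ℝ) 1) :
    ∃ u ∈ span ℂ {x, y}, ‖u‖ = 1 ∧ ⟪T u, u⟫ = (1 - t) * ⟪T x, x⟫ + t * ⟪T y, y⟫ := by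
  set p := ⟪T x, x⟫
  set q := ⟪T y, y⟫
  rcases eq_or_ne p q with hpq | hpq
  · exact ⟨x, subset_span (by simp), hx, by rw [← hpq]; ring⟩
  have hd : q - p ≠ 0 := sub_ne_zero.2 hpq.symm
  set T' : E →L[ℂ] E := (conj (q - p))⁻¹ • (T - conj p • 1)
  have hT' : ∀ u : E, ‖u‖ = 1 → ⟪T' u, u⟫ = (⟪T u, u⟫ - p) / (q - p) := by
    intro u hu
    simp [T', inner_self_eq_norm_sq_to_K, hu, div_eq_mul_inv]
  obtain ⟨u, hu, hu1, hTu⟩ := exists_inner_map_self_eq_of_eq_zero_of_eq_one T' hx hy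
    (by rw [hT' x hx, sub_self, zero_div]) (by rw [hT' y hy, div_self hd]) ht
  refine ⟨u, hu, hu1, ?_⟩
  rw [hT' u hu1, div_eq_iff hd] at hTu
  linear_combination hTu

theorem convex_numericalRange (T : E →L[ℂ] E) (W : Submodule ℂ E) :
    Convex ℝ (numericalRange T W) := by
  rintro _ ⟨x, hxW, hx, rfl⟩ _ ⟨y, hyW, hy, rfl⟩ a b ha hb hab
  obtain ⟨u, hu, hu1, hTu⟩ := exists_inner_map_self_eq_convex_combination T hx hy ⟨hb, by linarith⟩
  refine ⟨u, span_le.2 (Set.insert_subset hxW (Set.singleton_subset_iff.2 hyW)) hu, hu1, ?_⟩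
  rw [hTu, eq_sub_of_add_eq hab]
  simp [Complex.real_smul]

theorem exists_unit_le_re_mul_inner_map_self (T : E →L[ℂ] E) (W : Submodule ℂ E)
    {ε : ℝ} (hε : 0 < ε) (hT : ∀ w ∈ W, ε * ‖w‖ ^ 2 ≤ ‖⟪T w, w⟫‖) :
    ∃ μ : ℂ, ‖μ‖ = 1 ∧ ∀ w ∈ W, ε * ‖w‖ ^ 2 ≤ (μ * ⟪T w, w⟫).re := by
  obtain ⟨μ, hμ, hμT⟩ : ∃ μ : ℂ, ‖μ‖ = 1 ∧ ∀ z ∈ numericalRange T W, ε ≤ (μ * z).re := by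
    rcases (numericalRange T W).eq_empty_or_nonempty with h | h
    · exact ⟨1, norm_one, by simp [h]⟩
    obtain ⟨v, hv, hvT⟩ := exists_unit_le_inner_of_convex (convex_numericalRange T W) h hε
      (by rintro _ ⟨w, hwW, hw, rfl⟩; simpa [hw] using hT w hwW)
    exact ⟨conj v, by simpa using hv, fun z hz => by simpa [Complex.inner, mul_comm] using hvT z hz⟩
  refine ⟨μ, hμ, fun w hw => ?_⟩
  rcases eq_or_ne w 0 with rfl | hw0
  · simp
  obtain ⟨u, huW, hu, hTu⟩ := exists_unit_inner_map_self T hw hw0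
  rw [hTu, mul_left_comm, Complex.re_ofReal_mul, mul_comm ε]
  exact mul_le_mul_of_nonneg_left (hμT _ ⟨u, huW, hu, rfl⟩) (sq_nonneg _)

end NumericalRange

section Coercive

variable {E : Type*} [NormedAddCommGroup E] [InnerProductSpace ℂ E]

theorem coercive_compression_add_smul_starProjection {T : E →L[ℂ] E} {K : Submodule ℂ E}
    [K.HasOrthogonalProjection] {ε : ℝ} (hε : 0 < ε) {μ : ℂ} (hμ : ‖μ‖ = 1)
    (hT : ∀ w ∈ Kᗮ, ε * ‖w‖ ^ 2 ≤ (μ * ⟪T w, w⟫).re) :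
    Coercive (Kᗮ.starProjection ∘L T ∘L Kᗮ.starProjection + ((ε : ℂ) * μ) • K.starProjection) := by
  refine ⟨ε, hε, fun φ => ?_⟩
  set P := K.starProjection
  set Q := Kᗮ.starProjection
  set A₀ := Q ∘L T ∘L Q + ((ε : ℂ) * μ) • P
  have hPφ : ⟪P φ, φ⟫ = ‖P φ‖ ^ 2 := calc
    ⟪P φ, φ⟫ = ⟪P (P φ), φ⟫ := by rw [starProjection_eq_self_iff.2 (K.starProjection_apply_mem φ)]
    _ = ⟪P φ, P φ⟫ := K.inner_starProjection_left_eq_right _ _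
    _ = ‖P φ‖ ^ 2 := inner_self_eq_norm_sq_to_K _
  have hQφ : ⟪Q (T (Q φ)), φ⟫ = ⟪T (Q φ), Q φ⟫ := Kᗮ.inner_starProjection_left_eq_right _ _
  have hA₀ : ⟪A₀ φ, φ⟫ = ⟪T (Q φ), Q φ⟫ + ε * conj μ * ‖P φ‖ ^ 2 := by
    simp only [A₀, add_apply, ContinuousLinearMap.comp_apply, smul_apply, inner_add_left,
      inner_smul_left, hQφ, hPφ, map_mul, Complex.conj_ofReal]
  have hre : (μ * ⟪A₀ φ, φ⟫).re = (μ * ⟪T (Q φ), Q φ⟫).re + ε * ‖P φ‖ ^ 2 := by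
    rw [hA₀, mul_add, show μ * (ε * conj μ * ‖P φ‖ ^ 2) = ((ε * ‖P φ‖ ^ 2 : ℝ) : ℂ) * (μ * conj μ)
      by push_cast; ring, Complex.mul_conj', hμ, Complex.ofReal_one, one_pow, mul_one,
      Complex.add_re, Complex.ofReal_re]
  calc ε * ‖φ‖ ^ 2 = ε * ‖Q φ‖ ^ 2 + ε * ‖P φ‖ ^ 2 := by
        rw [K.norm_sq_eq_add_norm_sq_starProjection φ]; ring
    _ ≤ (μ * ⟪A₀ φ, φ⟫).re := by rw [hre]; gcongr; exact hT _ (Kᗮ.starProjection_apply_mem φ)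
    _ ≤ ‖μ * ⟪A₀ φ, φ⟫‖ := Complex.re_le_norm _
    _ = ‖⟪A₀ φ, φ⟫‖ := by rw [norm_mul, hμ, one_mul]

theorem exists_coercive_add_compact_of_forall_mem_orthogonal {T : E →L[ℂ] E} {K : Submodule ℂ E}
    [FiniteDimensional ℂ K] {ε : ℝ} (hε : 0 < ε) (hT : ∀ w ∈ Kᗮ, ε * ‖w‖ ^ 2 ≤ ‖⟪T w, w⟫‖) :
    ∃ A₀ F : E →L[ℂ] E, Coercive A₀ ∧ IsCompactOperator F ∧ T = A₀ + F := by
  obtain ⟨μ, hμ, hμT⟩ := exists_unit_le_re_mul_inner_map_self T Kᗮ hε hT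
  set P := K.starProjection
  set A₀ := Kᗮ.starProjection ∘L T ∘L Kᗮ.starProjection + ((ε : ℂ) * μ) • P
  have hrange : ∀ x, (T - A₀) x ∈ K ⊔ K.map (T : E →ₗ[ℂ] E) := by
    intro x
    have : (T - A₀) x = T (P x) + (P (T (x - P x)) - ((ε : ℂ) * μ) • P x) := by
      simp only [A₀, P, sub_apply, add_apply, ContinuousLinearMap.comp_apply, smul_apply,
        starProjection_orthogonal_val, map_sub]
      abel
    rw [this]
    exact add_mem (mem_sup_right ⟨P x, K.starProjection_apply_mem x, rfl⟩)
      (mem_sup_left (sub_mem (K.starProjection_apply_mem _)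
        (K.smul_mem _ (K.starProjection_apply_mem x))))
  exact ⟨A₀, T - A₀, coercive_compression_add_smul_starProjection hε hμ hμT,
    isCompactOperator_of_forall_mem _ _ hrange, (add_sub_cancel _ _).symm⟩

end Coercive

section Galerkin

variable {E : Type*} [NormedAddCommGroup E] [InnerProductSpace ℂ E] {A : E →L[ℂ] E}

theorem isGalerkinSolution_iff {K : Submodule ℂ E} [K.HasOrthogonalProjection] {g x : E} :
    IsGalerkinSolution A K g x ↔
      x ∈ K ∧ K.orthogonalProjectionOnto (A x) = K.orthogonalProjectionOnto g := by
  rw [IsGalerkinSolution, ← sub_eq_zero, ← map_sub, orthogonalProjectionOnto_eq_zero_iff,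
    mem_orthogonal']
  simp only [inner_sub_left, sub_eq_zero]

theorem exists_galerkinSolution_clm {K : Submodule ℂ E} [FiniteDimensional ℂ K]
    (h0 : ∀ z, IsGalerkinSolution A K 0 z → z = 0) :
    ∃ S : E →L[ℂ] E, ∀ g x, IsGalerkinSolution A K g x ↔ x = S g := by
  set π := K.orthogonalProjectionOnto
  let G : K →ₗ[ℂ] K := (π ∘L A ∘L K.subtypeL : K →L[ℂ] K)
  have hG : Function.Injective G := by
    refine (injective_iff_map_eq_zero G).2 fun z hz => Subtype.ext ?_
    exact h0 z (isGalerkinSolution_iff.2 ⟨z.2, by simpa [G, π] using hz⟩)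
  set e := LinearEquiv.ofInjectiveEndo G hG
  refine ⟨K.subtypeL ∘L LinearMap.toContinuousLinearMap (e.symm : K →ₗ[ℂ] K) ∘L π, fun g x => ?_⟩
  have hGe : G (e.symm (π g)) = π g := e.apply_symm_apply _
  rw [isGalerkinSolution_iff]
  constructor
  · rintro ⟨hx, hAx⟩
    exact congrArg Subtype.val (hG (show G ⟨x, hx⟩ = G (e.symm (π g)) by rw [hGe]; exact hAx))
  · rintro rfl
    exact ⟨(e.symm (π g)).2, hGe⟩

theorem GalerkinConverges.exists_forall_eq_zero {V : ℕ → Submodule ℂ E}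
    (h : GalerkinConverges A V) :
    ∃ N₀, ∀ N ≥ N₀, ∀ z, IsGalerkinSolution A (V N) 0 z → z = 0 := by
  obtain ⟨N₀, hN₀⟩ := (h 0).1
  exact ⟨N₀, fun N hN z hz => (hN₀ N hN).unique hz ⟨zero_mem _, by simp⟩⟩

theorem GalerkinConverges.dense_iSup {V : ℕ → Submodule ℂ E} (h : GalerkinConverges A V) :
    Dense ((⨆ N, V N : Submodule ℂ E) : Set E) := by
  intro x
  obtain ⟨N₀, hN₀⟩ := (h (A x)).1
  have : ∀ N, ∃ y, N₀ ≤ N → IsGalerkinSolution A (V N) (A x) y := fun N =>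
    if hN : N₀ ≤ N then (hN₀ N hN).exists.imp fun _ hy _ => hy else ⟨0, fun h => absurd h hN⟩
  choose φ hφ using this
  have hev : ∀ᶠ N in atTop, IsGalerkinSolution A (V N) (A x) (φ N) := eventually_atTop.2 ⟨N₀, hφ⟩
  exact mem_closure_of_tendsto ((h (A x)).2 φ hev x rfl)
    (hev.mono fun N hN => le_iSup V N hN.1)

/-- `⟪A (w - e), w⟫` is the Schur complement of the block of `K` in the Galerkin matrix of
`K ⊕ ℂ w`. -/
def IsNearlySingularDirection (A : E →L[ℂ] E) (K : Submodule ℂ E) (ε : ℝ) (w : E) : Prop :=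
  w ∈ Kᗮ ∧ ∃ e, IsGalerkinSolution A K (A w) e ∧ ‖⟪A (w - e), w⟫‖ ≤ ε * ‖w‖ ^ 2

theorem IsNearlySingularDirection.exists_isGalerkinSolution {K : Submodule ℂ E}
    [FiniteDimensional ℂ K] {ε : ℝ} {w : E} (hε : 0 ≤ ε)
    (h : IsNearlySingularDirection A K ε w) :
    ∃ g u, IsGalerkinSolution A (K ⊔ ℂ ∙ w) g u ∧ ‖g‖ ≤ ε * ‖w‖ ∧ ‖w‖ ≤ ‖u‖ := by
  obtain ⟨hwK, e, ⟨heK, he⟩, hsmall⟩ := h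
  set W := K ⊔ ℂ ∙ w
  have hAu : ∀ ψ ∈ W, ‖⟪A (w - e), ψ⟫‖ ≤ ε * ‖w‖ * ‖ψ‖ := by
    intro ψ hψ
    obtain ⟨v, hv, _, hc, rfl⟩ := mem_sup.1 hψ
    obtain ⟨c, rfl⟩ := mem_span_singleton.1 hc
    have hAuv : ⟪A (w - e), v⟫ = 0 := by rw [map_sub, inner_sub_left, he v hv, sub_self]
    have hwv : ⟪c • w, v⟫ = 0 := by
      rw [inner_smul_left, (mem_orthogonal' K w).1 hwK v hv, mul_zero]
    have hcw : ‖c‖ * ‖w‖ ≤ ‖v + c • w‖ := by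
      rw [← norm_smul, add_comm]
      exact norm_le_norm_add_of_inner_eq_zero hwv
    rw [inner_add_right, hAuv, zero_add, inner_smul_right, norm_mul]
    calc ‖c‖ * ‖⟪A (w - e), w⟫‖ ≤ ‖c‖ * (ε * ‖w‖ ^ 2) := by gcongr
      _ = ε * ‖w‖ * (‖c‖ * ‖w‖) := by ring
      _ ≤ ε * ‖w‖ * ‖v + c • w‖ := by gcongr
  refine ⟨W.starProjection (A (w - e)), w - e,
    ⟨sub_mem (mem_sup_right (mem_span_singleton_self w)) (mem_sup_left heK), fun ψ hψ => ?_⟩,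
    norm_starProjection_le_of_inner_le (by positivity) hAu, ?_⟩
  · rw [W.inner_starProjection_left_eq_right, starProjection_eq_self_iff.2 hψ]
  · rw [sub_eq_add_neg]
    exact norm_le_norm_add_of_inner_eq_zero (𝕜 := ℂ)
      (by rw [inner_neg_right, (mem_orthogonal' K w).1 hwK e heK, neg_zero])

theorem exists_coercive_add_compact_of_forall_not_isNearlySingularDirection {Vs : ℕ → Submodule ℂ E}
    [∀ N, FiniteDimensional ℂ (Vs N)] (hconv : GalerkinConverges A Vs) {ε : ℝ} (hε : 0 < ε)
    {N' : ℕ} (h : ∀ N ≥ N', ∀ w ∈ ⨆ M, Vs M, w ≠ 0 → ¬ IsNearlySingularDirection A (Vs N) ε w) :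
    ∃ A₀ F : E →L[ℂ] E, Coercive A₀ ∧ IsCompactOperator F ∧ A = A₀ + F := by
  obtain ⟨N₀, hN₀⟩ := hconv.exists_forall_eq_zero
  set K := Vs (max N' N₀)
  obtain ⟨S, hS⟩ := exists_galerkinSolution_clm (hN₀ (max N' N₀) (le_max_right _ _))
  set T := A - A ∘L S ∘L A
  have hT : ∀ w ∈ Kᗮ, ε * ‖w‖ ^ 2 ≤ ‖⟪T w, w⟫‖ := by
    refine forall_mem_orthogonal_le_of_dense (le_iSup Vs _) hconv.dense_iSup (by fun_prop)
      (by fun_prop) fun w hwK hwD => ?_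
    rcases eq_or_ne w 0 with rfl | hw0
    · simp
    have := h (max N' N₀) (le_max_left _ _) w hwD hw0
    simp only [IsNearlySingularDirection, not_and, not_exists, not_le] at this
    simpa [T, map_sub] using (this hwK _ ((hS _ _).2 rfl)).le
  obtain ⟨A₀, F, hA₀, hF, hTA⟩ := exists_coercive_add_compact_of_forall_mem_orthogonal hε hT
  have hSK : ∀ x, (A ∘L S ∘L A) x ∈ K.map (A : E →ₗ[ℂ] E) :=
    fun x => ⟨S (A x), ((hS _ _).2 rfl).1, rfl⟩
  refine ⟨A₀, F + A ∘L S ∘L A, hA₀, hF.add (isCompactOperator_of_forall_mem _ _ hSK), ?_⟩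
  rw [← add_assoc, ← hTA, sub_add_cancel]

end Galerkin

theorem exists_interleaved {P : ℕ → ℕ → ℕ → Prop} (h : ∀ k n, ∃ n' ≥ n, ∃ m ≥ n', P k n' m) :
    ∃ N M : ℕ → ℕ, (∀ k, P k (N k) (M k)) ∧ (∀ k, N k ≤ M k) ∧ ∀ k, M k < N (k + 1) := by
  choose n hn m hm hP using h
  let idx : ℕ → ℕ := fun k => Nat.rec 0 (fun k i => m k i + 1) k
  exact ⟨fun k => n k (idx k), fun k => m k (idx k), fun k => hP k _, fun k => hm k _,
    fun k => (Nat.lt_succ_self _).trans_le (hn (k + 1) (idx (k + 1)))⟩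

section Augment

variable {E : Type*} [NormedAddCommGroup E] [InnerProductSpace ℂ E]
  {Vs : ℕ → Submodule ℂ E} {N : ℕ → ℕ} {w : ℕ → E}

def augment (Vs : ℕ → Submodule ℂ E) (N : ℕ → ℕ) (w : ℕ → E) (j : ℕ) : Submodule ℂ E :=
  Vs j ⊔ span ℂ (w '' {k | N k ≤ j})

theorem finiteDimensional_augment [∀ j, FiniteDimensional ℂ (Vs j)] (hN : StrictMono N)
    (j : ℕ) : FiniteDimensional ℂ (augment Vs N w j) :=
  have : FiniteDimensional ℂ (span ℂ (w '' {k | N k ≤ j})) :=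
    FiniteDimensional.span_of_finite ℂ
      (((Set.finite_Iic j).subset fun k (hk : N k ≤ j) => (hN.id_le k).trans hk).image w)
  by unfold augment; infer_instance

theorem monotone_augment (hmono : Monotone Vs) : Monotone (augment Vs N w) :=
  fun _ _ hij => sup_le_sup (hmono hij) (span_mono (Set.image_mono fun _ hk => le_trans hk hij))

theorem augment_le {M : ℕ → ℕ} (hmono : Monotone Vs) (hN : StrictMono N) (hM : Monotone M)
    (hw : ∀ k, w k ∈ Vs (M k)) (j : ℕ) : augment Vs N w j ≤ Vs (max j (M j)) := by
  refine sup_le (hmono (le_max_left _ _)) (span_le.2 ?_)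
  rintro _ ⟨k, hk, rfl⟩
  exact hmono ((hM ((hN.id_le k).trans hk)).trans (le_max_right _ _)) (hw k)

theorem augment_apply_eq {M : ℕ → ℕ} (hmono : Monotone Vs) (hN : StrictMono N)
    (hw : ∀ k, w k ∈ Vs (M k)) (hMN : ∀ k, M k < N (k + 1)) (k : ℕ) :
    augment Vs N w (N k) = Vs (N k) ⊔ ℂ ∙ w k := by
  have hwk : w k ∈ augment Vs N w (N k) :=
    mem_sup_right (subset_span (Set.mem_image_of_mem w (show N k ≤ N k from le_rfl)))
  refine le_antisymm (sup_le le_sup_left (span_le.2 ?_))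
    (sup_le le_sup_left ((span_singleton_le_iff_mem _ _).2 hwk))
  rintro _ ⟨i, hi, rfl⟩
  rcases (hN.le_iff_le.1 hi).lt_or_eq with hik | rfl
  · exact mem_sup_left (hmono ((hMN i).trans_le (hN.monotone hik)).le (hw i))
  · exact mem_sup_right (mem_span_singleton_self _)

end Augment

theorem GalerkinConverges.exists_bound {A : H →L[ℂ] H} {V : ℕ → Submodule ℂ H}
    [∀ N, FiniteDimensional ℂ (V N)] (hA : Function.Surjective A) (h : GalerkinConverges A V) :
    ∃ N₀, ∃ C ≥ 0, ∀ N ≥ N₀, ∀ g x, IsGalerkinSolution A (V N) g x → ‖x‖ ≤ C * ‖g‖ := by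
  obtain ⟨N₀, hN₀⟩ := h.exists_forall_eq_zero
  have : ∀ N, ∃ S : H →L[ℂ] H, N₀ ≤ N → ∀ g x, IsGalerkinSolution A (V N) g x ↔ x = S g :=
    fun N => if hN : N₀ ≤ N then (exists_galerkinSolution_clm (hN₀ N hN)).imp fun _ hS _ => hS
      else ⟨0, fun h => absurd h hN⟩
  choose S hS using this
  obtain ⟨C, hC⟩ : ∃ C, ∀ N, ‖S N‖ ≤ C := by
    refine banach_steinhaus fun g => ?_
    obtain ⟨x, rfl⟩ := hA g
    have hlim := (h (A x)).2 (fun N => S N (A x))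
      (eventually_atTop.2 ⟨N₀, fun N hN => (hS N hN _ _).2 rfl⟩) x rfl
    obtain ⟨C, hC⟩ := hlim.norm.bddAbove_range
    exact ⟨C, fun N => hC ⟨N, rfl⟩⟩
  refine ⟨N₀, C, (norm_nonneg _).trans (hC 0), fun N hN g x hx => ?_⟩
  rw [(hS N hN g x).1 hx]
  exact (S N).le_of_opNorm_le (hC N) g

theorem exists_sandwiched_not_galerkinConverges {A : H →L[ℂ] H} (hA : Function.Surjective A)
    {Vs : ℕ → Submodule ℂ H} [∀ N, FiniteDimensional ℂ (Vs N)] (hmono : Monotone Vs)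
    (h : ∀ ε > 0, ∀ N', ∃ N ≥ N', ∃ w ∈ ⨆ M, Vs M,
      w ≠ 0 ∧ IsNearlySingularDirection A (Vs N) ε w) :
    ∃ V : ℕ → Submodule ℂ H, (∀ N, FiniteDimensional ℂ (V N)) ∧ Monotone V ∧
      ¬ GalerkinConverges A V ∧ ∀ N, Vs N ≤ V N ∧ ∃ M, V N ≤ Vs M := by
  obtain ⟨N, M, hw, hNM, hMN⟩ := exists_interleaved (P := fun k n m =>
      ∃ w ∈ Vs m, w ≠ 0 ∧ IsNearlySingularDirection A (Vs n) (1 / (k + 1)) w) fun k N' => by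
    obtain ⟨N, hN, w, hwD, hw⟩ := h (1 / (k + 1)) (by positivity) N'
    obtain ⟨M, hM⟩ := (mem_iSup_of_directed _ hmono.directed_le).1 hwD
    exact ⟨N, hN, max N M, le_max_left _ _, w, hmono (le_max_right _ _) hM, hw⟩
  choose w hwM hw0 hw using hw
  have hN : StrictMono N := strictMono_nat_of_lt_succ fun k => (hNM k).trans_lt (hMN k)
  have hM : StrictMono M := strictMono_nat_of_lt_succ fun k => (hMN k).trans_le (hNM (k + 1))
  have hfd := finiteDimensional_augment (Vs := Vs) (w := w) hN
  refine ⟨augment Vs N w, hfd, monotone_augment hmono, fun hconv => ?_,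
    fun j => ⟨le_sup_left, _, augment_le hmono hN hM.monotone hwM j⟩⟩
  obtain ⟨N₀, C, hC0, hC⟩ := hconv.exists_bound hA
  obtain ⟨k, hk⟩ := exists_nat_gt (max (N₀ : ℝ) C)
  obtain ⟨g, u, hsol, hg, hu⟩ := (hw k).exists_isGalerkinSolution (by positivity)
  rw [← augment_apply_eq hmono hN hwM hMN] at hsol
  have hN₀k : N₀ ≤ N k := (Nat.cast_le.1 ((le_max_left _ _).trans hk.le)).trans (hN.id_le k)
  have hCk : C / (k + 1) < 1 :=
    (div_lt_one (by positivity)).2 (by linarith [le_max_right (N₀ : ℝ) C])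
  have hwk : 0 < ‖w k‖ := norm_pos_iff.2 (hw0 k)
  have := calc ‖w k‖ ≤ ‖u‖ := hu
    _ ≤ C * ‖g‖ := hC (N k) hN₀k g u hsol
    _ ≤ C * (1 / (k + 1) * ‖w k‖) := by gcongr
    _ = C / (k + 1) * ‖w k‖ := by ring
    _ < 1 * ‖w k‖ := by gcongr
  linarith

/-- If `A` is invertible but not coercive-plus-compact, and the Galerkin method converges
for an increasing sequence `(Vs N)` of finite-dimensional subspaces, then there is an
increasing sequence `(V N)` of finite-dimensional subspaces, sandwiched between the `Vs N`
(i.e. `Vs N ⊆ V N ⊆ Vs (M N)` for some `M N`), for which the Galerkin method does not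
converge. -/
theorem exists_sandwiched_subspaces_galerkin_not_converges
    (A : H →L[ℂ] H)
    (hA : ∃ B : H →L[ℂ] H, B.comp A = ContinuousLinearMap.id ℂ H ∧
      A.comp B = ContinuousLinearMap.id ℂ H)
    (hnc : ¬ ∃ A₀ K : H →L[ℂ] H, Coercive A₀ ∧ IsCompactOperator ⇑K ∧ A = A₀ + K)
    (Vs : ℕ → Submodule ℂ H) (hfd : ∀ N, FiniteDimensional ℂ (Vs N))
    (hmono : Monotone Vs) (hconv : GalerkinConverges A Vs) :
    ∃ V : ℕ → Submodule ℂ H, (∀ N, FiniteDimensional ℂ (V N)) ∧ Monotone V ∧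
      ¬ GalerkinConverges A V ∧ ∀ N : ℕ, Vs N ≤ V N ∧ ∃ M : ℕ, V N ≤ Vs M := by
  obtain ⟨B, -, hAB⟩ := hA
  have hsurj : Function.Surjective A := fun g => ⟨B g, congr($hAB g)⟩
  by_cases h : ∀ ε > 0, ∀ N', ∃ N ≥ N', ∃ w ∈ ⨆ M, Vs M,
      w ≠ 0 ∧ IsNearlySingularDirection A (Vs N) ε w
  · exact exists_sandwiched_not_galerkinConverges hsurj hmono h
  · push Not at h
    obtain ⟨ε, hε, N', hN'⟩ := h
    exact (hnc
      (exists_coercive_add_compact_of_forall_not_isNearlySingularDirection hconv hε hN')).elim
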